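/- Let (n_k)_{k≥1} be strictly increasing positive integers with n_1 ≤ N, and for a positive integer N let i(N) be the unique index with n_{i(N)} ≤ N < n_{i(N)+1}. Suppose there are positive constants and a real p ∈ (1,2] with n_{k+1} ≥ n_k^p for all k, and let σ_N² := Σ_{k=1}^{i(N)} v_k(N) + Σ_{k>i(N)} w_k(N), where v_k(N) ≥ c·N for k ≤ i(N) and w_k(N) ≤ C·N²/n_k for k > i(N), with also v_k(N) ≤ C·N for k ≤ i(N). Then there exist constants c', C' > 0 (independent of N) with c'·N·i(N) ≤ σ_N² ≤ C'·N·i(N). -/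

import Mathlib

/-!
Beyond `i(N)` the growth condition makes `n_k` grow at least geometrically: once `x ≥ 2`,
`x ^ p ≥ 2 ^ (p - 1) * x`, so `n_{i(N)+1+j} ≥ N * 2 ^ ((p - 1) j)` because `n_{i(N)+1} > N`.
Hence the tail `Σ_{k > i(N)} C N² / n_k` is dominated by a geometric series of total
`≲ N ≤ N i(N)`, while the `i(N)` head terms are each of size `≍ N`.
-/

lemma two_rpow_sub_one_mul_le_rpow {x p : ℝ} (hx : 2 ≤ x) (hp : 1 ≤ p) :
    2 ^ (p - 1) * x ≤ x ^ p := by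
  calc 2 ^ (p - 1) * x ≤ x ^ (p - 1) * x := by gcongr
    _ = x ^ p := by rw [← Real.rpow_add_one (by positivity)]; ring_nf

lemma mul_geom_le_of_rpow_le_succ {x : ℕ → ℝ} {p : ℝ} (hp : 1 ≤ p) (h0 : 2 ≤ x 0)
    (hx : ∀ j, x j ^ p ≤ x (j + 1)) (j : ℕ) : x 0 * (2 ^ (p - 1)) ^ j ≤ x j := by
  have hs : (1 : ℝ) ≤ 2 ^ (p - 1) := Real.one_le_rpow (by norm_num) (by linarith)
  induction j with
  | zero => simp
  | succ j ih =>
    have h2 : 2 ≤ x j :=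
      h0.trans <| (le_mul_of_one_le_right (by linarith) (one_le_pow₀ hs)).trans ih
    calc x 0 * (2 ^ (p - 1)) ^ (j + 1) = 2 ^ (p - 1) * (x 0 * (2 ^ (p - 1)) ^ j) := by ring
      _ ≤ 2 ^ (p - 1) * x j := by gcongr
      _ ≤ x j ^ p := two_rpow_sub_one_mul_le_rpow h2 hp
      _ ≤ x (j + 1) := hx j

lemma tsum_le_of_le_geometric {f : ℕ → ℝ} {B t : ℝ} {m : ℕ} (hf : ∀ k, 0 ≤ f k)
    (hzero : ∀ k < m, f k = 0) (ht0 : 0 ≤ t) (ht1 : t < 1)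
    (hle : ∀ j, f (j + m) ≤ B * t ^ j) :
    ∑' k, f k ≤ B / (1 - t) := by
  have hgeom : Summable fun j ↦ B * t ^ j := (summable_geometric_of_lt_one ht0 ht1).mul_left B
  have hshift : Summable fun j ↦ f (j + m) := hgeom.of_nonneg_of_le (fun j ↦ hf _) hle
  rw [← hshift.sum_add_tsum_nat_add',
    Finset.sum_eq_zero fun k hk ↦ hzero k (Finset.mem_range.mp hk), zero_add, div_eq_mul_inv,
    ← tsum_geometric_of_lt_one ht0 ht1, ← tsum_mul_left]
  exact hshift.tsum_le_tsum hle hgeom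

lemma tsum_tail_le {p : ℝ} (hp : 1 < p) {n : ℕ → ℕ}
    (hrec : ∀ k, 1 ≤ k → (n k : ℝ) ^ p ≤ n (k + 1)) {N i : ℕ} (hN : 1 ≤ N)
    (hNi : N < n (i + 1)) {f : ℕ → ℝ} {C : ℝ} (hC : 0 ≤ C)
    (hf : ∀ k, i < k → 0 ≤ f k ∧ f k ≤ C * N ^ 2 / n k) :
    ∑' k, (if i < k then f k else 0) ≤ C * N / (1 - (2 ^ (p - 1))⁻¹) := by
  have hs : 1 < (2 : ℝ) ^ (p - 1) := Real.one_lt_rpow (by norm_num) (by linarith)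
  have hNi' : (N : ℝ) + 1 ≤ n (0 + (i + 1)) := by rw [zero_add]; exact_mod_cast hNi
  have hN' : (1 : ℝ) ≤ N := by exact_mod_cast hN
  have hgrowth (j : ℕ) : (N : ℝ) * (2 ^ (p - 1)) ^ j ≤ n (j + (i + 1)) :=
    calc (N : ℝ) * (2 ^ (p - 1)) ^ j ≤ n (0 + (i + 1)) * (2 ^ (p - 1)) ^ j :=
          mul_le_mul_of_nonneg_right (by linarith) (by positivity)
      _ ≤ n (j + (i + 1)) :=
        mul_geom_le_of_rpow_le_succ (x := fun j ↦ (n (j + (i + 1)) : ℝ)) hp.le (by linarith)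
          (fun j ↦ by simpa [add_right_comm] using hrec (j + (i + 1)) (by omega)) j
  refine tsum_le_of_le_geometric (m := i + 1) (fun k ↦ ?_) (fun k hk ↦ if_neg (by omega))
    (by positivity) (inv_lt_one_of_one_lt₀ hs) (fun j ↦ ?_)
  · split_ifs with hk
    exacts [(hf k hk).1, le_rfl]
  · rw [if_pos (by omega), inv_pow, ← div_eq_mul_inv]
    calc f (j + (i + 1)) ≤ C * N ^ 2 / n (j + (i + 1)) := (hf _ (by omega)).2
      _ ≤ C * N ^ 2 / (N * (2 ^ (p - 1)) ^ j) := by gcongr; exact hgrowth j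
      _ = C * N / (2 ^ (p - 1)) ^ j := by field_simp

theorem stmt17_general (p : ℝ) (hp1 : 1 < p)
    (n : ℕ → ℕ) (hpos : ∀ k, 1 ≤ k → 1 ≤ n k)
    (hrec : ∀ k, 1 ≤ k → ((n k : ℝ)) ^ p ≤ (n (k + 1) : ℝ))
    (i : ℕ → ℕ) (hi1 : ∀ N, n 1 ≤ N → 1 ≤ i N)
    (hiN : ∀ N, n 1 ≤ N → n (i N) ≤ N ∧ N < n (i N + 1))
    (v w : ℕ → ℕ → ℝ) (c C : ℝ) (hc : 0 < c) (hC : 0 < C)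
    (hv : ∀ N, n 1 ≤ N → ∀ k, 1 ≤ k → k ≤ i N →
      c * (N : ℝ) ≤ v k N ∧ v k N ≤ C * (N : ℝ))
    (hw : ∀ N, n 1 ≤ N → ∀ k, i N < k →
      0 ≤ w k N ∧ w k N ≤ C * (N : ℝ) ^ 2 / (n k : ℝ))
    (σ2 : ℕ → ℝ)
    (hσ2 : ∀ N, σ2 N = (∑ k ∈ Finset.Icc 1 (i N), v k N) +
      ∑' k : ℕ, (if i N < k then w k N else 0)) :
    ∃ c' C' : ℝ, 0 < c' ∧ 0 < C' ∧ ∀ N, n 1 ≤ N →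
      c' * ((N : ℝ) * (i N : ℝ)) ≤ σ2 N ∧ σ2 N ≤ C' * ((N : ℝ) * (i N : ℝ)) := by
  have ht : 0 < 1 - ((2 : ℝ) ^ (p - 1))⁻¹ :=
    sub_pos.mpr (inv_lt_one_of_one_lt₀ (Real.one_lt_rpow (by norm_num) (by linarith)))
  refine ⟨c, C + C / (1 - (2 ^ (p - 1))⁻¹), hc, by positivity, fun N hN ↦ ?_⟩
  have hN1 : 1 ≤ N := (hpos 1 le_rfl).trans hN
  have hcard : (Finset.Icc 1 (i N)).card = i N := by simp
  have hhead_lb := Finset.card_nsmul_le_sum (Finset.Icc 1 (i N)) (v · N) (c * N)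
    fun k hk ↦ (hv N hN k (Finset.mem_Icc.mp hk).1 (Finset.mem_Icc.mp hk).2).1
  have hhead_ub := Finset.sum_le_card_nsmul (Finset.Icc 1 (i N)) (v · N) (C * N)
    fun k hk ↦ (hv N hN k (Finset.mem_Icc.mp hk).1 (Finset.mem_Icc.mp hk).2).2
  have htail_nonneg : 0 ≤ ∑' k, (if i N < k then w k N else 0) :=
    tsum_nonneg fun k ↦ by split_ifs with hk; exacts [(hw N hN k hk).1, le_rfl]
  have htail := tsum_tail_le hp1 hrec hN1 (hiN N hN).2 hC.le (hw N hN)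
  have hNi : (N : ℝ) ≤ N * i N := le_mul_of_one_le_right (Nat.cast_nonneg N) (mod_cast hi1 N hN)
  rw [hcard, nsmul_eq_mul] at hhead_lb hhead_ub
  rw [hσ2 N]
  constructor
  · linarith
  · calc _ ≤ i N * (C * N) + C * N / (1 - (2 ^ (p - 1))⁻¹) := add_le_add hhead_ub htail
      _ ≤ i N * (C * N) + C * (N * i N) / (1 - (2 ^ (p - 1))⁻¹) := by gcongr
      _ = _ := by ring

/-- abstract form of Proposition 6: with `n_{k+1} ≥ n_k^p`,
`v_k(N) ≍ N` for `1 ≤ k ≤ i(N)` and `0 ≤ w_k(N) ≤ C N²/n_k` for `k > i(N)`,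
the quantity `σ_N² = Σ_{k=1}^{i(N)} v_k(N) + Σ_{k>i(N)} w_k(N)` satisfies
`σ_N² ≍ N·i(N)`. -/
theorem stmt17 (p : ℝ) (hp1 : 1 < p) (hp2 : p ≤ 2)
    (n : ℕ → ℕ) (hmono : StrictMono n) (hpos : ∀ k, 1 ≤ k → 1 ≤ n k)
    (hrec : ∀ k, 1 ≤ k → ((n k : ℝ)) ^ p ≤ (n (k + 1) : ℝ))
    (i : ℕ → ℕ) (hi1 : ∀ N, n 1 ≤ N → 1 ≤ i N)
    (hiN : ∀ N, n 1 ≤ N → n (i N) ≤ N ∧ N < n (i N + 1))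
    (v w : ℕ → ℕ → ℝ) (c C : ℝ) (hc : 0 < c) (hC : 0 < C)
    (hv : ∀ N, n 1 ≤ N → ∀ k, 1 ≤ k → k ≤ i N →
      c * (N : ℝ) ≤ v k N ∧ v k N ≤ C * (N : ℝ))
    (hw : ∀ N, n 1 ≤ N → ∀ k, i N < k →
      0 ≤ w k N ∧ w k N ≤ C * (N : ℝ) ^ 2 / (n k : ℝ))
    (σ2 : ℕ → ℝ)
    (hσ2 : ∀ N, σ2 N = (∑ k ∈ Finset.Icc 1 (i N), v k N) +
      ∑' k : ℕ, (if i N < k then w k N else 0)) :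
    ∃ c' C' : ℝ, 0 < c' ∧ 0 < C' ∧ ∀ N, n 1 ≤ N →
      c' * ((N : ℝ) * (i N : ℝ)) ≤ σ2 N ∧ σ2 N ≤ C' * ((N : ℝ) * (i N : ℝ)) :=
  stmt17_general p hp1 n hpos hrec i hi1 hiN v w c C hc hC hv hw σ2 hσ2
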